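/- arXiv:2501.01878 — 6 statements merged into one kernel-verified Lean document; each statement's English description precedes it below -/
import Mathlib

section
/- Under the standing hypotheses, assume in addition 0 < η < e^{σ} and e^{σ} + η < 1. Let n ∈ ℕ and x ∈ B₁ satisfy |P_U G(j+1,x)| ≤ 1 for j = 0,…,n−1. Then G(j,x) ∈ B₁ for j = 0,…,n, and for every t ∈ [0,1]: e^{σ(t+n)}(1 − ηe^{−σ})^{n+1}|P_L x| ≤ |P_L G(t+n,x)| ≤ e^{σ(t+n)}(1 + ηe^{−σ})^{n+1}|P_L x| and e^{u(t+n)}(1 − η)^{n+1}|P_U x| ≤ |P_U G(t+n,x)| ≤ e^{u(t+n)}(1 + η)^{n+1}|P_U x|. -/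
noncomputable section
open Real Set

abbrev R3 := EuclideanSpace ℝ (Fin 3)

/-- Orthogonal projection onto `L = ℝe₁ ⊕ ℝe₂`. -/
def PL (x : R3) : R3 := WithLp.toLp 2 fun i => if (i : ℕ) = 2 then 0 else x i

/-- Orthogonal projection onto `U = ℝe₃`. -/
def PU (x : R3) : R3 := WithLp.toLp 2 fun i => if (i : ℕ) = 2 then x i else 0

/-- The plane `L = ℝe₁ ⊕ ℝe₂`. -/
def Lset : Set R3 := {x | x 2 = 0}

/-- The line `U = ℝe₃`. -/
def Uset : Set R3 := {x | x 0 = 0 ∧ x 1 = 0}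

/-- `B₁ = {x : |P_L x| ≤ 1, |P_U x| ≤ 1}`. -/
def B1 : Set R3 := {x | ‖PL x‖ ≤ 1 ∧ ‖PU x‖ ≤ 1}

/-- The linearized flow `T(t)`. -/
def Tmap (σ μ u t : ℝ) (x : R3) : R3 := WithLp.toLp 2 fun i =>
  if (i : ℕ) = 0 then exp (σ * t) * (cos (μ * t) * x 0 + sin (μ * t) * x 1)
  else if (i : ℕ) = 1 then exp (σ * t) * (-(sin (μ * t)) * x 0 + cos (μ * t) * x 1)
  else exp (u * t) * x 2

/-- A C¹ flow on ℝ³. -/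
def IsC1Flow (G : ℝ → R3 → R3) : Prop :=
  ContDiff ℝ 1 (fun p : ℝ × R3 => G p.1 p.2) ∧ (∀ x, G 0 x = x) ∧
    ∀ s t x, G (t + s) x = G t (G s x)

/-- `M` is invariant under the flow `G` in the set `N`. -/
def InvariantIn (G : ℝ → R3 → R3) (M N : Set R3) : Prop :=
  ∀ x ∈ M ∩ N, ∀ I : Set ℝ, (0 : ℝ) ∈ I → I.OrdConnected →
    (∀ t ∈ I, G t x ∈ N) → ∀ t ∈ I, G t x ∈ M

/-!
On `B₁` the time-`t` map `G t` (`0 ≤ t ≤ 1`) is `η`-close to `T(t)` in `C¹`, so by the mean value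
inequality `G t y - G t (P_U y)` is within `η |P_L y|` of `T(t) (P_L y)`. As `G t (P_U y)` stays in
`U` by invariance, `P_L` kills it, and `|P_L G t y|` is `e^{σt} |P_L y|` up to `η |P_L y|`;
symmetrically `|P_U G t y|` is `e^{ut} |P_U y|` up to `η |P_U y|`. Because `e^σ + η < 1`, the
`L`-component of the orbit stays in the unit disc at integer times, the `U`-component does by
assumption, so the orbit stays in `B₁` and the one-step estimates compose.
-/

lemma abs_norm_map_sub_norm_le {E F : Type*} [SeminormedAddCommGroup E]
    [SeminormedAddCommGroup F] (P : E →+ F) (hP : ∀ y, ‖P y‖ ≤ ‖y‖) {a b : E} (hb : P b = 0)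
    (c : E) : |‖P a‖ - ‖P c‖| ≤ ‖a - b - c‖ :=
  calc |‖P a‖ - ‖P c‖| ≤ ‖P a - P c‖ := abs_norm_sub_norm_le _ _
    _ = ‖P (a - b - c)‖ := by rw [map_sub, map_sub, hb, sub_zero]
    _ ≤ ‖a - b - c‖ := hP _

def PLₗ : R3 →ₗ[ℝ] R3 where
  toFun := PL
  map_add' a b := by ext i; fin_cases i <;> simp [PL]
  map_smul' c a := by ext i; fin_cases i <;> simp [PL]

def PUₗ : R3 →ₗ[ℝ] R3 where
  toFun := PU
  map_add' a b := by ext i; fin_cases i <;> simp [PU]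
  map_smul' c a := by ext i; fin_cases i <;> simp [PU]

def Tclm (σ μ u t : ℝ) : R3 →L[ℝ] R3 := LinearMap.toContinuousLinearMap
  { toFun := Tmap σ μ u t
    map_add' a b := by ext i; fin_cases i <;> simp [Tmap] <;> ring
    map_smul' c a := by ext i; fin_cases i <;> simp [Tmap] <;> ring }

lemma Tclm_apply (σ μ u t : ℝ) (y : R3) : Tclm σ μ u t y = Tmap σ μ u t y := rfl

lemma norm_PL (y : R3) : ‖PL y‖ = √(y 0 ^ 2 + y 1 ^ 2) := by
  simp [EuclideanSpace.norm_eq, Fin.sum_univ_three, PL]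

lemma norm_PU (y : R3) : ‖PU y‖ = |y 2| := by
  simp [EuclideanSpace.norm_eq, Fin.sum_univ_three, PU, Real.sqrt_sq_eq_abs]

lemma norm_PL_le (y : R3) : ‖PL y‖ ≤ ‖y‖ := by
  rw [norm_PL, EuclideanSpace.norm_eq]
  simp only [Fin.sum_univ_three, Real.norm_eq_abs, sq_abs]
  exact Real.sqrt_le_sqrt (by nlinarith [sq_nonneg (y 2)])

lemma norm_PU_le (y : R3) : ‖PU y‖ ≤ ‖y‖ := by
  rw [norm_PU, ← Real.sqrt_sq_eq_abs, EuclideanSpace.norm_eq]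
  simp only [Fin.sum_univ_three, Real.norm_eq_abs, sq_abs]
  exact Real.sqrt_le_sqrt (by nlinarith [sq_nonneg (y 0), sq_nonneg (y 1)])

lemma sub_PU (y : R3) : y - PU y = PL y := by
  ext i; fin_cases i <;> simp [PL, PU]

lemma sub_PL (y : R3) : y - PL y = PU y := by
  ext i; fin_cases i <;> simp [PL, PU]

lemma PL_PL (y : R3) : PL (PL y) = PL y := by
  ext i; fin_cases i <;> simp [PL]

lemma PU_PU (y : R3) : PU (PU y) = PU y := by
  ext i; fin_cases i <;> simp [PU]

lemma PU_mem_Uset (y : R3) : PU y ∈ Uset := ⟨rfl, rfl⟩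

lemma PL_mem_Lset (y : R3) : PL y ∈ Lset := rfl

lemma PL_eq_zero_of_mem_Uset {z : R3} (hz : z ∈ Uset) : PL z = 0 := by
  ext i; fin_cases i <;> simp [PL, hz.1, hz.2]

lemma PU_eq_zero_of_mem_Lset {z : R3} (hz : z ∈ Lset) : PU z = 0 := by
  ext i; fin_cases i <;> simp [PU, show z 2 = 0 from hz]

lemma PU_mem_B1 {y : R3} (hy : y ∈ B1) : PU y ∈ B1 :=
  ⟨by simp [PL_eq_zero_of_mem_Uset (PU_mem_Uset y)], by rw [PU_PU]; exact hy.2⟩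

lemma PL_mem_B1 {y : R3} (hy : y ∈ B1) : PL y ∈ B1 :=
  ⟨by rw [PL_PL]; exact hy.1, by simp [PU_eq_zero_of_mem_Lset (PL_mem_Lset y)]⟩

lemma convex_B1 : Convex ℝ B1 := by
  have h (P : R3 →ₗ[ℝ] R3) : Convex ℝ (P ⁻¹' Metric.closedBall 0 1) :=
    (convex_closedBall 0 1).linear_preimage P
  convert (h PLₗ).inter (h PUₗ) using 1
  ext y
  simp [B1, PLₗ, PUₗ]

lemma norm_PL_Tmap (σ μ u t : ℝ) (y : R3) :
    ‖PL (Tmap σ μ u t y)‖ = exp (σ * t) * ‖PL y‖ := by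
  have h : Tmap σ μ u t y 0 ^ 2 + Tmap σ μ u t y 1 ^ 2
      = exp (σ * t) ^ 2 * (y 0 ^ 2 + y 1 ^ 2) := by
    simp only [Tmap]
    norm_num
    nlinarith [sin_sq_add_cos_sq (μ * t)]
  rw [norm_PL, norm_PL, h, Real.sqrt_mul (sq_nonneg _), Real.sqrt_sq (exp_pos _).le]

lemma norm_PU_Tmap (σ μ u t : ℝ) (y : R3) :
    ‖PU (Tmap σ μ u t y)‖ = exp (u * t) * ‖PU y‖ := by
  rw [norm_PU, norm_PU, show Tmap σ μ u t y 2 = exp (u * t) * y 2 from rfl, abs_mul,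
    abs_of_pos (exp_pos _)]

lemma IsC1Flow.differentiable {G : ℝ → R3 → R3} (hG : IsC1Flow G) (t : ℝ) :
    Differentiable ℝ (G t) :=
  (hG.1.comp ((contDiff_const (c := t)).prodMk contDiff_id)).differentiable one_ne_zero

section Step

variable {σ μ u t η : ℝ} {g : R3 → R3}

lemma norm_sub_sub_Tclm_le (hg : Differentiable ℝ g) (hη : 0 ≤ η)
    (hg' : ∀ x ∈ B1, ∀ v, ‖fderiv ℝ g x v - Tmap σ μ u t v‖ ≤ η * ‖v‖)
    {x z : R3} (hx : x ∈ B1) (hz : z ∈ B1) :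
    ‖g x - g z - Tclm σ μ u t (x - z)‖ ≤ η * ‖x - z‖ :=
  convex_B1.norm_image_sub_le_of_norm_hasFDerivWithin_le'
    (fun w _ => (hg w).hasFDerivAt.hasFDerivWithinAt)
    (fun w hw => ContinuousLinearMap.opNorm_le_bound _ hη (hg' w hw)) hz hx

lemma abs_norm_PL_sub_le (hg : Differentiable ℝ g) (hη : 0 ≤ η)
    (hg' : ∀ x ∈ B1, ∀ v, ‖fderiv ℝ g x v - Tmap σ μ u t v‖ ≤ η * ‖v‖)
    {y : R3} (hy : y ∈ B1) (hU : g (PU y) ∈ Uset) :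
    |‖PL (g y)‖ - exp (σ * t) * ‖PL y‖| ≤ η * ‖PL y‖ :=
  calc |‖PL (g y)‖ - exp (σ * t) * ‖PL y‖|
      = |‖PL (g y)‖ - ‖PL (Tclm σ μ u t (PL y))‖| := by rw [Tclm_apply, norm_PL_Tmap, PL_PL]
    _ ≤ ‖g y - g (PU y) - Tclm σ μ u t (PL y)‖ :=
      abs_norm_map_sub_norm_le PLₗ.toAddMonoidHom norm_PL_le (PL_eq_zero_of_mem_Uset hU) _
    _ ≤ η * ‖PL y‖ := by
      simpa only [sub_PU] using norm_sub_sub_Tclm_le hg hη hg' hy (PU_mem_B1 hy)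

lemma abs_norm_PU_sub_le (hg : Differentiable ℝ g) (hη : 0 ≤ η)
    (hg' : ∀ x ∈ B1, ∀ v, ‖fderiv ℝ g x v - Tmap σ μ u t v‖ ≤ η * ‖v‖)
    {y : R3} (hy : y ∈ B1) (hL : g (PL y) ∈ Lset) :
    |‖PU (g y)‖ - exp (u * t) * ‖PU y‖| ≤ η * ‖PU y‖ :=
  calc |‖PU (g y)‖ - exp (u * t) * ‖PU y‖|
      = |‖PU (g y)‖ - ‖PU (Tclm σ μ u t (PU y))‖| := by rw [Tclm_apply, norm_PU_Tmap, PU_PU]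
    _ ≤ ‖g y - g (PL y) - Tclm σ μ u t (PU y)‖ :=
      abs_norm_map_sub_norm_le PUₗ.toAddMonoidHom norm_PU_le (PU_eq_zero_of_mem_Lset hL) _
    _ ≤ η * ‖PU y‖ := by
      simpa only [sub_PL] using norm_sub_sub_Tclm_le hg hη hg' hy (PL_mem_B1 hy)

end Step

lemma flow_step_bounds {u σ μ η rB : ℝ} (hu : 0 ≤ u) (hσ : σ ≤ 0) (hη : 0 ≤ η)
    (hB1B : B1 ⊆ Metric.closedBall (0 : R3) rB) {G : ℝ → R3 → R3} (hG : IsC1Flow G)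
    (hD2 : ∀ t ∈ Icc (0:ℝ) 1, ∀ x ∈ B1, ∀ y : R3,
      ‖fderiv ℝ (G t) x y - Tmap σ μ u t y‖ ≤ η * ‖y‖)
    (hGB : ∀ t ∈ Icc (0:ℝ) 1, ∀ x ∈ B1, G t x ∈ Metric.closedBall (0 : R3) rB)
    (hLinv : InvariantIn G Lset (Metric.closedBall 0 rB))
    (hUinv : InvariantIn G Uset (Metric.closedBall 0 rB))
    {t : ℝ} (ht : t ∈ Icc (0:ℝ) 1) {y : R3} (hy : y ∈ B1) :
    |‖PL (G t y)‖ - exp (σ * t) * ‖PL y‖| ≤ η * exp (-σ) * exp (σ * t) * ‖PL y‖ ∧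
      |‖PU (G t y)‖ - exp (u * t) * ‖PU y‖| ≤ η * exp (u * t) * ‖PU y‖ := by
  have hinv {M : Set R3} (hM : InvariantIn G M (Metric.closedBall 0 rB)) {z : R3}
      (hzM : z ∈ M) (hzB : z ∈ B1) : G t z ∈ M :=
    hM z ⟨hzM, hB1B hzB⟩ (Icc 0 1) ⟨le_rfl, zero_le_one⟩ ordConnected_Icc
      (fun s hs => hGB s hs z hzB) t ht
  have hL := abs_norm_PL_sub_le (hG.differentiable t) hη (hD2 t ht) hy
    (hinv hUinv (PU_mem_Uset y) (PU_mem_B1 hy))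
  have hU := abs_norm_PU_sub_le (hG.differentiable t) hη (hD2 t ht) hy
    (hinv hLinv (PL_mem_Lset y) (PL_mem_B1 hy))
  -- `e^{-σ} e^{σt} = e^{σ(t-1)} ≥ 1` lets the `L`-error be measured relative to `e^{σt}`
  have hσt : 1 ≤ exp (-σ) * exp (σ * t) := by
    rw [← exp_add]; exact one_le_exp (by nlinarith [ht.2])
  have hut : 1 ≤ exp (u * t) := one_le_exp (mul_nonneg hu ht.1)
  constructor
  · nlinarith [mul_nonneg (mul_nonneg hη (sub_nonneg.2 hσt)) (norm_nonneg (PL y))]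
  · nlinarith [mul_nonneg (mul_nonneg hη (sub_nonneg.2 hut)) (norm_nonneg (PU y))]

lemma exp_growth_bounds_of_unit_steps {f : ℝ → ℝ} {r κ : ℝ} (hκ₀ : 0 ≤ κ) (hκ₁ : κ ≤ 1) {n : ℕ}
    (hstep : ∀ j : ℕ, j ≤ n → ∀ t ∈ Icc (0:ℝ) 1,
      |f (t + j) - exp (r * t) * f j| ≤ κ * exp (r * t) * f j)
    {t : ℝ} (ht : t ∈ Icc (0:ℝ) 1) :
    exp (r * (t + n)) * (1 - κ) ^ (n + 1) * f 0 ≤ f (t + n) ∧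
      f (t + n) ≤ exp (r * (t + n)) * (1 + κ) ^ (n + 1) * f 0 := by
  have hbounds (j : ℕ) (hj : j ≤ n) (t : ℝ) (ht : t ∈ Icc (0:ℝ) 1) :
      exp (r * t) * (1 - κ) * f j ≤ f (t + j) ∧ f (t + j) ≤ exp (r * t) * (1 + κ) * f j := by
    obtain ⟨h₁, h₂⟩ := abs_le.1 (hstep j hj t ht)
    constructor <;> linarith
  have hunit (k : ℕ) (hk : k < n) :
      exp r * (1 - κ) * f k ≤ f ↑(k + 1) ∧ f ↑(k + 1) ≤ exp r * (1 + κ) * f k := by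
    simpa [add_comm] using hbounds k hk.le 1 ⟨zero_le_one, le_rfl⟩
  have hlow := geom_le (u := fun k : ℕ => f k) (by positivity) n fun k hk => (hunit k hk).1
  have hup := le_geom (u := fun k : ℕ => f k) (by positivity) n fun k hk => (hunit k hk).2
  simp only [Nat.cast_zero] at hlow hup
  obtain ⟨hn₁, hn₂⟩ := hbounds n le_rfl t ht
  have hsplit : exp (r * (t + n)) = exp (r * t) * exp r ^ n := by
    rw [mul_add, exp_add, mul_comm r (n : ℝ), exp_nat_mul]
  have he := exp_pos (r * t)
  constructor
  · calc exp (r * (t + n)) * (1 - κ) ^ (n + 1) * f 0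
        = exp (r * t) * (1 - κ) * ((exp r * (1 - κ)) ^ n * f 0) := by rw [hsplit, mul_pow]; ring
      _ ≤ exp (r * t) * (1 - κ) * f n := by gcongr
      _ ≤ f (t + n) := hn₁
  · calc f (t + n) ≤ exp (r * t) * (1 + κ) * f n := hn₂
      _ ≤ exp (r * t) * (1 + κ) * ((exp r * (1 + κ)) ^ n * f 0) := by gcongr
      _ = exp (r * (t + n)) * (1 + κ) ^ (n + 1) * f 0 := by rw [hsplit, mul_pow]; ring

theorem statement2_general
    (u σ μ η rB : ℝ) (hu : 0 < u) (hσ : σ < 0) (hη : 0 < η)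
    (hB1B : B1 ⊆ Metric.closedBall (0 : R3) rB)
    (G : ℝ → R3 → R3) (hG : IsC1Flow G)
    (hD2 : ∀ t ∈ Icc (0:ℝ) 1, ∀ x ∈ B1, ∀ y : R3,
      ‖fderiv ℝ (G t) x y - Tmap σ μ u t y‖ ≤ η * ‖y‖)
    (hGB : ∀ t ∈ Icc (0:ℝ) 1, ∀ x ∈ B1, G t x ∈ Metric.closedBall (0 : R3) rB)
    (hLinv : InvariantIn G Lset (Metric.closedBall 0 rB))
    (hUinv : InvariantIn G Uset (Metric.closedBall 0 rB))
    (hησ : η < exp σ) (hησ1 : exp σ + η < 1)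
    (n : ℕ) (x : R3) (hx : x ∈ B1)
    (hPU : ∀ j : ℕ, j < n → ‖PU (G ((j : ℝ) + 1) x)‖ ≤ 1) :
    (∀ j : ℕ, j ≤ n → G (j : ℝ) x ∈ B1) ∧
    ∀ t ∈ Icc (0:ℝ) 1,
      exp (σ * (t + n)) * (1 - η * exp (-σ)) ^ (n + 1) * ‖PL x‖ ≤ ‖PL (G (t + n) x)‖ ∧
      ‖PL (G (t + n) x)‖ ≤ exp (σ * (t + n)) * (1 + η * exp (-σ)) ^ (n + 1) * ‖PL x‖ ∧
      exp (u * (t + n)) * (1 - η) ^ (n + 1) * ‖PU x‖ ≤ ‖PU (G (t + n) x)‖ ∧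
      ‖PU (G (t + n) x)‖ ≤ exp (u * (t + n)) * (1 + η) ^ (n + 1) * ‖PU x‖ := by
  have step {t : ℝ} (ht : t ∈ Icc (0:ℝ) 1) {y : R3} (hy : y ∈ B1) :=
    flow_step_bounds hu.le hσ.le hη.le hB1B hG hD2 hGB hLinv hUinv ht hy
  have hexpσ : exp (-σ) * exp σ = 1 := by rw [← exp_add, neg_add_cancel, exp_zero]
  have hκ : η * exp (-σ) ≤ 1 := by nlinarith [exp_pos (-σ)]
  have hmem (j : ℕ) (hj : j ≤ n) : G j x ∈ B1 := by
    induction j with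
    | zero => simpa [hG.2.1] using hx
    | succ j ih =>
      refine ⟨?_, by simpa using hPU j hj⟩
      have hy := ih (by omega)
      have hstepL := (abs_le.1 (step ⟨zero_le_one, le_rfl⟩ hy).1).2
      rw [mul_one, mul_assoc η, hexpσ, mul_one] at hstepL
      rw [Nat.cast_succ, add_comm, hG.2.2]
      nlinarith [hy.1, norm_nonneg (PL (G j x))]
  refine ⟨hmem, fun t ht => ?_⟩
  have hL := exp_growth_bounds_of_unit_steps (f := fun s => ‖PL (G s x)‖) (by positivity) hκ
    (fun j hj t ht => by simpa only [hG.2.2] using (step ht (hmem j hj)).1) ht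
  have hU := exp_growth_bounds_of_unit_steps (f := fun s => ‖PU (G s x)‖) hη.le (by linarith [exp_pos σ])
    (fun j hj t ht => by simpa only [hG.2.2] using (step ht (hmem j hj)).2) ht
  simp only [hG.2.1] at hL hU
  exact ⟨hL.1, hL.2, hU.1, hU.2⟩

theorem statement2
    (u σ μ η rB : ℝ) (hu : 0 < u) (hσ : σ < 0) (hμ : 0 < μ) (hη : 0 < η)
    (hB1B : B1 ⊆ Metric.closedBall (0 : R3) rB)
    (G : ℝ → R3 → R3) (hG : IsC1Flow G) (hG0 : ∀ t : ℝ, G t 0 = 0)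
    (hD2 : ∀ t ∈ Icc (0:ℝ) 1, ∀ x ∈ B1, ∀ y : R3,
      ‖fderiv ℝ (G t) x y - Tmap σ μ u t y‖ ≤ η * ‖y‖)
    (hGB : ∀ t ∈ Icc (0:ℝ) 1, ∀ x ∈ B1, G t x ∈ Metric.closedBall (0 : R3) rB)
    (hLinv : InvariantIn G Lset (Metric.closedBall 0 rB))
    (hUinv : InvariantIn G Uset (Metric.closedBall 0 rB))
    (hησ : η < exp σ) (hησ1 : exp σ + η < 1)
    (n : ℕ) (x : R3) (hx : x ∈ B1)
    (hPU : ∀ j : ℕ, j < n → ‖PU (G ((j : ℝ) + 1) x)‖ ≤ 1) :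
    (∀ j : ℕ, j ≤ n → G (j : ℝ) x ∈ B1) ∧
    ∀ t ∈ Icc (0:ℝ) 1,
      exp (σ * (t + n)) * (1 - η * exp (-σ)) ^ (n + 1) * ‖PL x‖ ≤ ‖PL (G (t + n) x)‖ ∧
      ‖PL (G (t + n) x)‖ ≤ exp (σ * (t + n)) * (1 + η * exp (-σ)) ^ (n + 1) * ‖PL x‖ ∧
      exp (u * (t + n)) * (1 - η) ^ (n + 1) * ‖PU x‖ ≤ ‖PU (G (t + n) x)‖ ∧
      ‖PU (G (t + n) x)‖ ≤ exp (u * (t + n)) * (1 + η) ^ (n + 1) * ‖PU x‖ :=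
  statement2_general u σ μ η rB hu hσ hη hB1B G hG hD2 hGB hLinv hUinv hησ hησ1 n x hx hPU
end
end

section
/- Let F be a C¹ flow on ℝ³ and h : ℝ → ℝ³ a continuously differentiable flowline of F (h(t+s) = F(t,h(s)) for all s,t) with h(t) ≠ 0 and h'(t) ≠ 0 for all t and h(t) → 0 as |t| → ∞, and suppose there are reals t_U < t_L with h(t) ∈ (0,∞)e₃ for all t ≤ t_U and h(t) ∈ L for all t ≥ t_L. For ε > 0 set h_ε = (1/ε)h. Then: (i) for every ε ∈ (0, |h(t_U)|) there exists t_{E,ε} ≤ t_U with h_ε(t_{E,ε}) = e₃ and h_ε(t) ∈ (0,∞)e₃ for all t ≤ t_{E,ε}; (ii) there exist a strictly increasing sequence (t_{I,j})_{j∈ℕ} in [t_L, ∞) with t_{I,j} → ∞ and a strictly decreasing sequence (ε_j)_{j∈ℕ} in (0,∞) with ε_j → 0 such that for every j ∈ ℕ: ε_j < |h(t_U)|, |h_{ε_j}(t_{I,j})| = 1, the derivative of t ↦ |h_{ε_j}(t)|² at t_{I,j} is negative, h_{ε_j}(t) ∈ L for all t ≥ t_{I,j}, and h_{ε_j}'(t_{I,j})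 ∈ L. -/
/-!
(i) On `(-∞, t_U]` the flowline runs along the ray `(0,∞)e₃`, so `h = |h| e₃` there, and since
`|h| → 0` at `-∞` the intermediate value theorem gives a time with `|h| = ε`.

(ii) A positive function tending to `0` at `+∞` has negative derivative at arbitrarily late times
(mean value theorem). Applied to `|h|²`, this lets one pick times `t_{I,j} → ∞` after `t_L` at which
`|h|²` is decreasing and `|h|` strictly decreases along the sequence; then `ε_j = |h(t_{I,j})|`
normalizes `h_{ε_j}(t_{I,j})` to the unit sphere. Since `h` stays in the closed subspace `L` after
`t_L`, so do its difference quotients, hence its derivative.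
-/

noncomputable section
open Real Set

open Filter

/-- The third basis vector `e₃`. -/
def e3 : R3 := WithLp.toLp 2 fun i => if (i : ℕ) = 2 then 1 else 0

/-- The open positive ray `(0,∞)e₃`. -/
def posRay : Set R3 := {x | x 0 = 0 ∧ x 1 = 0 ∧ 0 < x 2}

open Topology

def Lsubspace : Submodule ℝ R3 where
  carrier := Lset
  add_mem' {x y} hx hy := by simp_all [Lset]
  zero_mem' := by simp [Lset]
  smul_mem' c x hx := by simp_all [Lset]

theorem isClosed_Lsubspace : IsClosed (Lsubspace : Set R3) :=
  isClosed_eq (by fun_prop) continuous_const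

theorem smul_mem_posRay {c : ℝ} (hc : 0 < c) {x : R3} (hx : x ∈ posRay) : c • x ∈ posRay := by
  obtain ⟨h0, h1, h2⟩ := hx
  exact ⟨by simp [h0], by simp [h1], by simpa using mul_pos hc h2⟩

theorem eq_norm_smul_e3_of_mem_posRay {x : R3} (hx : x ∈ posRay) : x = ‖x‖ • e3 := by
  obtain ⟨h0, h1, h2⟩ := hx
  have hnorm : ‖x‖ = x 2 := by
    rw [EuclideanSpace.norm_eq, Fin.sum_univ_three, h0, h1]
    simpa using Real.sqrt_sq h2.le
  ext i
  fin_cases i <;> simp [e3, hnorm, h0, h1]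

theorem deriv_mem_of_eventually_mem {𝕜 E : Type*} [NontriviallyNormedField 𝕜]
    [NormedAddCommGroup E] [NormedSpace 𝕜 E] {K : Submodule 𝕜 E} (hK : IsClosed (K : Set E))
    {f : 𝕜 → E} {t : 𝕜} (hf : ∀ᶠ s in 𝓝 t, f s ∈ K) : deriv f t ∈ K := by
  by_cases hd : DifferentiableAt 𝕜 f t
  · refine hK.mem_of_tendsto (hasDerivAt_iff_tendsto_slope.1 hd.hasDerivAt) ?_
    filter_upwards [nhdsWithin_le_nhds hf] with s hs
    rw [slope_def_module]
    exact K.smul_mem _ (K.sub_mem hs hf.self_of_nhds)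
  · rw [deriv_zero_of_not_differentiableAt hd]
    exact K.zero_mem

theorem frequently_deriv_neg_of_tendsto_zero {f : ℝ → ℝ} (hf : Differentiable ℝ f)
    (hpos : ∀ t, 0 < f t) (hlim : Tendsto f atTop (𝓝 0)) : ∃ᶠ t in atTop, deriv f t < 0 := by
  rw [frequently_atTop]
  intro a
  obtain ⟨b, hab, hba⟩ := ((eventually_gt_atTop a).and (hlim.eventually_lt_const (hpos a))).exists
  obtain ⟨c, hc, hslope⟩ := exists_deriv_eq_slope f hab hf.continuous.continuousOn
    hf.differentiableOn
  exact ⟨c, hc.1.le, hslope ▸ div_neg_of_neg_of_pos (by linarith) (by linarith)⟩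

theorem Filter.Frequently.exists_seq_strictMono_strictAnti_comp {S : Set ℝ}
    (hS : ∃ᶠ t in atTop, t ∈ S) {φ : ℝ → ℝ} (hpos : ∀ t ∈ S, 0 < φ t)
    (hφ : Tendsto φ atTop (𝓝 0)) :
    ∃ t : ℕ → ℝ, (∀ n, t n ∈ S) ∧ StrictMono t ∧ Tendsto t atTop atTop ∧ StrictAnti (φ ∘ t) := by
  obtain ⟨t, htS, ht⟩ := exists_seq_of_forall_finset_exists (· ∈ S)
    (fun x y => x + 1 < y ∧ φ y < φ x) fun s hs =>
      (hS.and_eventually <| (eventually_all_finset s).2 fun x hx =>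
        (eventually_gt_atTop _).and (hφ.eventually_lt_const (hpos x (hs x hx)))).exists
  have hgrowth : ∀ n : ℕ, t 0 + n ≤ t n := by
    intro n
    induction n with
    | zero => simp
    | succ n ih => push_cast; linarith [(ht n (n + 1) n.lt_succ_self).1]
  refine ⟨t, htS, fun m n hmn => by linarith [(ht m n hmn).1], ?_, fun m n hmn => (ht m n hmn).2⟩
  exact tendsto_atTop_mono hgrowth
    (tendsto_atTop_add_const_left _ _ tendsto_natCast_atTop_atTop)

theorem statement6_general
    (h : ℝ → R3) (hhC1 : ContDiff ℝ 1 h)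
    (hne : ∀ t : ℝ, h t ≠ 0)
    (hlim : Tendsto h (cocompact ℝ) (nhds 0))
    (tU tL : ℝ)
    (hU : ∀ t ≤ tU, h t ∈ posRay)
    (hL : ∀ t ≥ tL, h t ∈ Lset) :
    (∀ ε ∈ Ioo (0 : ℝ) ‖h tU‖, ∃ tE ≤ tU,
      ε⁻¹ • h tE = e3 ∧ ∀ t ≤ tE, ε⁻¹ • h t ∈ posRay) ∧
    (∃ tI : ℕ → ℝ, ∃ εs : ℕ → ℝ,
      StrictMono tI ∧ (∀ j, tL ≤ tI j) ∧ Tendsto tI atTop atTop ∧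
      StrictAnti εs ∧ (∀ j, 0 < εs j) ∧ Tendsto εs atTop (nhds 0) ∧
      ∀ j : ℕ,
        εs j < ‖h tU‖ ∧
        ‖(εs j)⁻¹ • h (tI j)‖ = 1 ∧
        deriv (fun t => ‖(εs j)⁻¹ • h t‖ ^ 2) (tI j) < 0 ∧
        (∀ t ≥ tI j, (εs j)⁻¹ • h t ∈ Lset) ∧
        deriv (fun t => (εs j)⁻¹ • h t) (tI j) ∈ Lset) := by
  have hd : Differentiable ℝ h := hhC1.differentiable one_ne_zero
  have hbot : Tendsto (fun t => ‖h t‖) atBot (𝓝 0) := by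
    simpa using (hlim.mono_left (atBot_le_cocompact (α := ℝ))).norm
  have htop : Tendsto (fun t => ‖h t‖) atTop (𝓝 0) := by
    simpa using (hlim.mono_left (atTop_le_cocompact (α := ℝ))).norm
  have hpos : ∀ t, 0 < ‖h t‖ := fun t => norm_pos_iff.2 (hne t)
  refine ⟨fun ε hε => ?_, ?_⟩
  · obtain ⟨tE, htE, hnorm⟩ := isPreconnected_Iic.intermediate_value_Ioc self_mem_Iic
      (le_principal_iff.2 (Iic_mem_atBot tU)) hd.continuous.norm.continuousOn hbot
      (Ioo_subset_Ioc_self hε)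
    refine ⟨tE, htE, ?_, fun t ht => smul_mem_posRay (inv_pos.2 hε.1) (hU t (ht.trans htE))⟩
    rw [eq_norm_smul_e3_of_mem_posRay (hU tE htE), show ‖h tE‖ = ε from hnorm,
      inv_smul_smul₀ hε.1.ne']
  · have hS : ∃ᶠ t in atTop,
        t ∈ {t | tL < t ∧ ‖h t‖ < ‖h tU‖ ∧ deriv (fun s => ‖h s‖ ^ 2) t < 0} :=
      (frequently_deriv_neg_of_tendsto_zero (hd.norm_sq ℝ) (fun t => pow_pos (hpos t) 2)
        (by simpa using htop.pow 2)).and_eventually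
        ((eventually_gt_atTop tL).and (htop.eventually_lt_const (hpos tU))) |>.mono
          fun t ⟨hderiv, htL, hsmall⟩ => ⟨htL, hsmall, hderiv⟩
    obtain ⟨tI, htIS, hmono, htItop, hanti⟩ :=
      hS.exists_seq_strictMono_strictAnti_comp (fun t _ => hpos t) htop
    refine ⟨tI, fun j => ‖h (tI j)‖, hmono, fun j => (htIS j).1.le, htItop, hanti,
      fun j => hpos _, htop.comp htItop, fun j => ⟨(htIS j).2.1, norm_smul_inv_norm (hne _), ?_,
        fun t ht => Lsubspace.smul_mem _ (hL t ((htIS j).1.le.trans ht)), ?_⟩⟩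
    · have hsq : (fun t => ‖‖h (tI j)‖⁻¹ • h t‖ ^ 2) =
          fun t => ‖h (tI j)‖⁻¹ ^ 2 * ‖h t‖ ^ 2 := by
        funext t
        rw [norm_smul, mul_pow, Real.norm_eq_abs, sq_abs]
      rw [hsq, deriv_const_mul_field]
      exact mul_neg_of_pos_of_neg (pow_pos (inv_pos.2 (hpos _)) 2) (htIS j).2.2
    · refine deriv_mem_of_eventually_mem isClosed_Lsubspace ?_
      filter_upwards [Ioi_mem_nhds (htIS j).1] with t ht
      exact Lsubspace.smul_mem _ (hL t ht.le)

theorem statement6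
    (F : ℝ → R3 → R3) (hF : IsC1Flow F)
    (h : ℝ → R3) (hhC1 : ContDiff ℝ 1 h)
    (hflowline : ∀ s t : ℝ, h (t + s) = F t (h s))
    (hne : ∀ t : ℝ, h t ≠ 0) (hne' : ∀ t : ℝ, deriv h t ≠ 0)
    (hlim : Tendsto h (cocompact ℝ) (nhds 0))
    (tU tL : ℝ) (htUL : tU < tL)
    (hU : ∀ t ≤ tU, h t ∈ posRay)
    (hL : ∀ t ≥ tL, h t ∈ Lset) :
    (∀ ε ∈ Ioo (0 : ℝ) ‖h tU‖, ∃ tE ≤ tU,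
      ε⁻¹ • h tE = e3 ∧ ∀ t ≤ tE, ε⁻¹ • h t ∈ posRay) ∧
    (∃ tI : ℕ → ℝ, ∃ εs : ℕ → ℝ,
      StrictMono tI ∧ (∀ j, tL ≤ tI j) ∧ Tendsto tI atTop atTop ∧
      StrictAnti εs ∧ (∀ j, 0 < εs j) ∧ Tendsto εs atTop (nhds 0) ∧
      ∀ j : ℕ,
        εs j < ‖h tU‖ ∧
        ‖(εs j)⁻¹ • h (tI j)‖ = 1 ∧
        deriv (fun t => ‖(εs j)⁻¹ • h t‖ ^ 2) (tI j) < 0 ∧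
        (∀ t ≥ tI j, (εs j)⁻¹ • h t ∈ Lset) ∧
        deriv (fun t => (εs j)⁻¹ • h t) (tI j) ∈ Lset) :=
  statement6_general h hhC1 hne hlim tU tL hU hL
end
end

section
/- Let u, μ, η̃ be reals with u > 0, μ > 0 and 0 < η̃ < min{u, μ}. Set c = ((u+η̃)(μ+η̃))/((u−η̃)(μ−η̃)) and k = e^{−6π(u+η̃)/(μ−η̃)}. Let Δ₂ ∈ (0,1) and Δ₁ = k·Δ₂^{c}. Then c > 1, k < 1 and Δ₁ < Δ₂; and if ψ, γ ∈ (−π, π) and φ₂, φ₁ are reals satisfying φ₂ − ψ ≥ ((μ+η̃)/(u−η̃))·log Δ₂ and φ₁ − γ ≤ ((μ−η̃)/(u+η̃))·log Δ₁, then φ₂ − φ₁ ≥ 4π. -/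
open Real

lemma one_lt_mul_div_mul_sub {u μ η : ℝ} (hη : 0 < η) (hu : η < u) (hμ : η < μ) :
    1 < (u + η) * (μ + η) / ((u - η) * (μ - η)) := by
  have hden : 0 < (u - η) * (μ - η) := mul_pos (sub_pos.mpr hu) (sub_pos.mpr hμ)
  rw [one_lt_div hden]
  nlinarith

lemma mul_rpow_lt_self {k x c : ℝ} (hk : k ≤ 1) (hx₀ : 0 < x) (hx₁ : x < 1) (hc : 1 < c) :
    k * x ^ c < x :=
  calc k * x ^ c ≤ x ^ c := mul_le_of_le_one_left (rpow_nonneg hx₀.le c) hk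
    _ < x ^ (1 : ℝ) := rpow_lt_rpow_of_exponent_gt hx₀ hx₁ hc
    _ = x := rpow_one x

lemma log_exp_mul_rpow (t c : ℝ) {x : ℝ} (hx : 0 < x) :
    log (exp t * x ^ c) = t + c * log x := by
  rw [log_mul (exp_pos t).ne' (rpow_pos_of_pos hx c).ne', log_exp, log_rpow hx]

theorem statement14_general
    (u μ ηt : ℝ)
    (hηt0 : 0 < ηt) (hηt : ηt < min u μ)
    (c k : ℝ)
    (hc : c = (u + ηt) * (μ + ηt) / ((u - ηt) * (μ - ηt)))
    (hk : k = exp (-(6 * π * (u + ηt) / (μ - ηt))))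
    (Δ₂ : ℝ) (hΔ₂ : Δ₂ ∈ Set.Ioo (0 : ℝ) 1)
    (Δ₁ : ℝ) (hΔ₁ : Δ₁ = k * Δ₂ ^ c) :
    1 < c ∧ k < 1 ∧ Δ₁ < Δ₂ ∧
    ∀ ψ ∈ Set.Ioo (-π) π, ∀ γ ∈ Set.Ioo (-π) π, ∀ φ₂ φ₁ : ℝ,
      φ₂ - ψ ≥ (μ + ηt) / (u - ηt) * Real.log Δ₂ →
      φ₁ - γ ≤ (μ - ηt) / (u + ηt) * Real.log Δ₁ →
      φ₂ - φ₁ ≥ 4 * π := by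
  obtain ⟨hηu, hημ⟩ := lt_min_iff.mp hηt
  obtain ⟨hΔ₂₀, hΔ₂₁⟩ := hΔ₂
  have hu_sub : 0 < u - ηt := sub_pos.mpr hηu
  have hμ_sub : 0 < μ - ηt := sub_pos.mpr hημ
  have hu_add : 0 < u + ηt := by linarith
  have hc₁ : 1 < c := hc ▸ one_lt_mul_div_mul_sub hηt0 hηu hημ
  have hk₁ : k < 1 := by
    rw [hk, exp_lt_one_iff, neg_lt_zero]
    exact div_pos (by positivity) hμ_sub
  refine ⟨hc₁, hk₁, hΔ₁ ▸ mul_rpow_lt_self hk₁.le hΔ₂₀ hΔ₂₁ hc₁, ?_⟩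
  rintro ψ ⟨hψ₁, hψ₂⟩ γ ⟨hγ₁, hγ₂⟩ φ₂ φ₁ h₂ h₁
  -- k shifts the bound at level Δ₁ by exactly 6π, and the exponent c turns its slope into that at Δ₂.
  have hlogΔ₁ : (μ - ηt) / (u + ηt) * log Δ₁ = -(6 * π) + (μ + ηt) / (u - ηt) * log Δ₂ := by
    rw [hΔ₁, hk, hc, log_exp_mul_rpow _ _ hΔ₂₀]
    field_simp
  linarith

theorem statement14
    (u μ ηt : ℝ) (hu : 0 < u) (hμ : 0 < μ)
    (hηt0 : 0 < ηt) (hηt : ηt < min u μ)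
    (c k : ℝ)
    (hc : c = (u + ηt) * (μ + ηt) / ((u - ηt) * (μ - ηt)))
    (hk : k = exp (-(6 * π * (u + ηt) / (μ - ηt))))
    (Δ₂ : ℝ) (hΔ₂ : Δ₂ ∈ Set.Ioo (0 : ℝ) 1)
    (Δ₁ : ℝ) (hΔ₁ : Δ₁ = k * Δ₂ ^ c) :
    1 < c ∧ k < 1 ∧ Δ₁ < Δ₂ ∧
    ∀ ψ ∈ Set.Ioo (-π) π, ∀ γ ∈ Set.Ioo (-π) π, ∀ φ₂ φ₁ : ℝ,
      φ₂ - ψ ≥ (μ + ηt) / (u - ηt) * Real.log Δ₂ →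
      φ₁ - γ ≤ (μ - ηt) / (u + ηt) * Real.log Δ₁ →
      φ₂ - φ₁ ≥ 4 * π :=
  statement14_general u μ ηt hηt0 hηt c k hc hk Δ₂ hΔ₂ Δ₁ hΔ₁
end

section
/- Let α > 0 and 0 < Δ₁ < Δ₂ be reals, R = [−α, α] × [Δ₁, Δ₂] ⊂ ℝ², Φ : R → ℝ continuous, Q : R → ℝ² continuous, and ψ* ∈ ℝ. Assume that for every p ∈ R: if Φ(p) = ψ* − π or Φ(p) = ψ* + π then Q₂(p) < −Δ₂, and if Φ(p) = ψ* then Q₂(p) > Δ₂. Define M₀ = {p ∈ R : ψ* − π < Φ(p) < ψ*} and M₁ = {p ∈ R : ψ* < Φ(p) < ψ* + π}. Then for every continuous curve g : [a,b] → R with Φ(g(a)) ≤ ψ* − π and Φ(g(b)) ≥ ψ* + π there exist a₀ < b₀ < a₁ < b₁ in [a,b] such that: g(t) ∈ M₀ and Q₂(g(t)) ∈ (Δ₁, Δ₂) for all t ∈ (a₀, b₀), with Q₂(g(a₀)) = Δ₁ and Q₂(g(b₀)) = Δ₂; and g(t) ∈ M₁ and Q₂(g(t)) ∈ (Δ₁,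 Δ₂) for all t ∈ (a₁, b₁), with Q₂(g(a₁)) = Δ₂ and Q₂(g(b₁)) = Δ₁. -/
/-!
Along the curve, `Φ ∘ g` must run from `ψ* − π` up to `ψ*` and later from `ψ*` up to `ψ* + π`.
Take the last time `r` at level `ψ* − π` before the first time `s` at level `ψ*`: on `(r, s)` the
curve stays in `M₀`, while `Q₂` is below `−Δ₂ < Δ₁` at `r` and above `Δ₂` at `s`, so the same
last-time/first-time construction applied to `Q₂` on `[r, s]` yields `a₀ < b₀`. After `b₀`,
where `Φ < ψ*`, the same argument runs through `M₁` with `Q₂` crossing downwards.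
-/

open Real Set

section Crossing

variable {α β γ : Type*} [ConditionallyCompleteLinearOrder α] [TopologicalSpace α]
  [OrderTopology α] [DenselyOrdered α] [LinearOrder β] [TopologicalSpace β]
  [OrderClosedTopology β] [LinearOrder γ] [TopologicalSpace γ] [OrderClosedTopology γ]
  {f : α → β} {c d : α} {y₁ y₂ : β}

theorem exists_upcrossing (hcd : c ≤ d) (hf : ContinuousOn f (Icc c d)) (hy : y₁ < y₂)
    (hc : f c ≤ y₁) (hd : y₂ ≤ f d) :
    ∃ r s, c ≤ r ∧ r < s ∧ s ≤ d ∧ f r = y₁ ∧ f s = y₂ ∧ MapsTo f (Ioo r s) (Ioo y₁ y₂) := by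
  obtain ⟨s, ⟨⟨hcs, hsd⟩, hfs⟩, hs_min⟩ : ∃ s, IsLeast (Icc c d ∩ f ⁻¹' {y₂}) s := by
    have hclosed := hf.preimage_isClosed_of_isClosed isClosed_Icc (isClosed_singleton (x := y₂))
    refine (isCompact_Icc.of_isClosed_subset hclosed inter_subset_left).exists_isLeast ?_
    obtain ⟨t, ht, hft⟩ := intermediate_value_Icc hcd hf ⟨hc.trans hy.le, hd⟩
    exact ⟨t, ht, hft⟩
  have hf_cs : ContinuousOn f (Icc c s) := hf.mono (Icc_subset_Icc_right hsd)
  obtain ⟨r, ⟨⟨hcr, hrs⟩, hfr⟩, hr_max⟩ : ∃ r, IsGreatest (Icc c s ∩ f ⁻¹' {y₁}) r := by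
    have hclosed := hf_cs.preimage_isClosed_of_isClosed isClosed_Icc (isClosed_singleton (x := y₁))
    refine (isCompact_Icc.of_isClosed_subset hclosed inter_subset_left).exists_isGreatest ?_
    obtain ⟨t, ht, hft⟩ := intermediate_value_Icc hcs hf_cs ⟨hc, hfs ▸ hy.le⟩
    exact ⟨t, ht, hft⟩
  have hrs : r < s := hrs.lt_of_ne (by rintro rfl; exact hy.ne (hfr.symm.trans hfs))
  refine ⟨r, s, hcr, hrs, hsd, hfr, hfs, fun t ⟨hrt, hts⟩ => ⟨?_, ?_⟩⟩
  · by_contra! hft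
    obtain ⟨t', ⟨htt', ht's⟩, hft'⟩ := intermediate_value_Icc hts.le
      (hf_cs.mono (Icc_subset_Icc_left (hcr.trans hrt.le))) ⟨hft, hfs ▸ hy.le⟩
    exact (hrt.trans_le htt').not_ge (hr_max ⟨⟨hcr.trans (hrt.le.trans htt'), ht's⟩, hft'⟩)
  · by_contra! hft
    obtain ⟨t', ⟨hrt', ht't⟩, hft'⟩ := intermediate_value_Icc hrt.le
      (hf.mono (Icc_subset_Icc hcr (hts.le.trans hsd))) ⟨hfr ▸ hy.le, hft⟩
    exact (ht't.trans_lt hts).not_ge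
      (hs_min ⟨⟨hcr.trans hrt', ht't.trans (hts.le.trans hsd)⟩, hft'⟩)

theorem exists_upcrossing_during_upcrossing {q : α → γ} {z₁ z₂ : γ} (hcd : c ≤ d)
    (hf : ContinuousOn f (Icc c d)) (hq : ContinuousOn q (Icc c d)) (hy : y₁ < y₂) (hz : z₁ < z₂)
    (hc : f c ≤ y₁) (hd : y₂ ≤ f d) (hq₁ : ∀ t ∈ Icc c d, f t = y₁ → q t < z₁)
    (hq₂ : ∀ t ∈ Icc c d, f t = y₂ → z₂ < q t) :
    ∃ a' b', c < a' ∧ a' < b' ∧ b' < d ∧ q a' = z₁ ∧ q b' = z₂ ∧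
      MapsTo f (Icc a' b') (Ioo y₁ y₂) ∧ MapsTo q (Ioo a' b') (Ioo z₁ z₂) := by
  obtain ⟨r, s, hcr, hrs, hsd, hfr, hfs, hf_rs⟩ := exists_upcrossing hcd hf hy hc hd
  have hqr : q r < z₁ := hq₁ r ⟨hcr, hrs.le.trans hsd⟩ hfr
  have hqs : z₂ < q s := hq₂ s ⟨hcr.trans hrs.le, hsd⟩ hfs
  obtain ⟨a', b', hra', hab', hb's, hqa', hqb', hq_ab⟩ :=
    exists_upcrossing hrs.le (hq.mono (Icc_subset_Icc hcr hsd)) hz hqr.le hqs.le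
  have hra' : r < a' := hra'.lt_of_ne (by rintro rfl; exact hqr.ne hqa')
  have hb's : b' < s := hb's.lt_of_ne (by rintro rfl; exact hqs.ne' hqb')
  exact ⟨a', b', hcr.trans_lt hra', hab', hb's.trans_le hsd, hqa', hqb',
    fun t ht => hf_rs ⟨hra'.trans_le ht.1, ht.2.trans_lt hb's⟩, hq_ab⟩

end Crossing

theorem statement17_general
    (α Δ₁ Δ₂ : ℝ) (hΔ₁ : 0 < Δ₁) (hΔ₁₂ : Δ₁ < Δ₂)
    (Φ : ℝ × ℝ → ℝ) (Q : ℝ × ℝ → ℝ × ℝ)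
    (hΦ : ContinuousOn Φ (Icc (-α) α ×ˢ Icc Δ₁ Δ₂))
    (hQ : ContinuousOn Q (Icc (-α) α ×ˢ Icc Δ₁ Δ₂))
    (ψ : ℝ)
    (hlow : ∀ p ∈ Icc (-α) α ×ˢ Icc Δ₁ Δ₂,
      (Φ p = ψ - π ∨ Φ p = ψ + π) → (Q p).2 < -Δ₂)
    (hhigh : ∀ p ∈ Icc (-α) α ×ˢ Icc Δ₁ Δ₂, Φ p = ψ → (Q p).2 > Δ₂) :
    ∀ a b : ℝ, a ≤ b → ∀ g : ℝ → ℝ × ℝ,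
      ContinuousOn g (Icc a b) →
      MapsTo g (Icc a b) (Icc (-α) α ×ˢ Icc Δ₁ Δ₂) →
      Φ (g a) ≤ ψ - π → Φ (g b) ≥ ψ + π →
      ∃ a₀ b₀ a₁ b₁ : ℝ,
        a₀ ∈ Icc a b ∧ b₀ ∈ Icc a b ∧ a₁ ∈ Icc a b ∧ b₁ ∈ Icc a b ∧
        a₀ < b₀ ∧ b₀ < a₁ ∧ a₁ < b₁ ∧
        (∀ t ∈ Ioo a₀ b₀,
          g t ∈ {p ∈ Icc (-α) α ×ˢ Icc Δ₁ Δ₂ | ψ - π < Φ p ∧ Φ p < ψ} ∧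
          (Q (g t)).2 ∈ Ioo Δ₁ Δ₂) ∧
        (Q (g a₀)).2 = Δ₁ ∧ (Q (g b₀)).2 = Δ₂ ∧
        (∀ t ∈ Ioo a₁ b₁,
          g t ∈ {p ∈ Icc (-α) α ×ˢ Icc Δ₁ Δ₂ | ψ < Φ p ∧ Φ p < ψ + π} ∧
          (Q (g t)).2 ∈ Ioo Δ₁ Δ₂) ∧
        (Q (g a₁)).2 = Δ₂ ∧ (Q (g b₁)).2 = Δ₁ := by
  intro a b hab g hg hmaps hga hgb
  have hf : ContinuousOn (fun t => Φ (g t)) (Icc a b) := hΦ.comp hg hmaps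
  have hq : ContinuousOn (fun t => (Q (g t)).2) (Icc a b) :=
    continuous_snd.comp_continuousOn (hQ.comp hg hmaps)
  obtain ⟨a₀, b₀, ha₀, hab₀, hb₀, hqa₀, hqb₀, hf₀, hq₀⟩ :=
    exists_upcrossing_during_upcrossing hab hf hq (sub_lt_self ψ pi_pos) hΔ₁₂ hga
      (by linarith [pi_pos]) (fun t ht h => (hlow _ (hmaps ht) (.inl h)).trans (by linarith))
      (fun t ht h => hhigh _ (hmaps ht) h)
  have hab₀' : a ≤ b₀ := (ha₀.trans hab₀).le
  -- `Q₂` crosses `[Δ₁, Δ₂]` downwards, i.e. upwards in the order dual.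
  obtain ⟨a₁, b₁, ha₁, hab₁, hb₁, hqa₁, hqb₁, hf₁, hq₁⟩ :=
    exists_upcrossing_during_upcrossing (q := fun t => OrderDual.toDual (Q (g t)).2) hb₀.le
      (hf.mono (Icc_subset_Icc_left hab₀')) (continuous_toDual.comp_continuousOn
        (hq.mono (Icc_subset_Icc_left hab₀'))) (lt_add_of_pos_right ψ pi_pos) hΔ₁₂
      (hf₀ (right_mem_Icc.2 hab₀.le)).2.le hgb
      (fun t ht h => hhigh _ (hmaps ⟨hab₀'.trans ht.1, ht.2⟩) h)
      (fun t ht h => (hlow _ (hmaps ⟨hab₀'.trans ht.1, ht.2⟩) (.inr h)).trans (by linarith))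
  have hmem : ∀ t, a < t → t < b → t ∈ Icc a b := fun t hat htb => ⟨hat.le, htb.le⟩
  refine ⟨a₀, b₀, a₁, b₁, hmem _ ha₀ (by linarith), hmem _ (by linarith) hb₀,
    hmem _ (by linarith) (by linarith), hmem _ (by linarith) hb₁, hab₀, ha₁, hab₁,
    fun t ht => ⟨⟨hmaps (hmem _ (by linarith [ht.1]) (by linarith [ht.2])),
      hf₀ (Ioo_subset_Icc_self ht)⟩, hq₀ ht⟩, hqa₀, hqb₀,
    fun t ht => ⟨⟨hmaps (hmem _ (by linarith [ht.1]) (by linarith [ht.2])),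
      hf₁ (Ioo_subset_Icc_self ht)⟩, (hq₁ ht).2, (hq₁ ht).1⟩,
    OrderDual.toDual_inj.1 hqa₁, OrderDual.toDual_inj.1 hqb₁⟩

theorem statement17
    (α Δ₁ Δ₂ : ℝ) (hα : 0 < α) (hΔ₁ : 0 < Δ₁) (hΔ₁₂ : Δ₁ < Δ₂)
    (Φ : ℝ × ℝ → ℝ) (Q : ℝ × ℝ → ℝ × ℝ)
    (hΦ : ContinuousOn Φ (Icc (-α) α ×ˢ Icc Δ₁ Δ₂))
    (hQ : ContinuousOn Q (Icc (-α) α ×ˢ Icc Δ₁ Δ₂))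
    (ψ : ℝ)
    (hlow : ∀ p ∈ Icc (-α) α ×ˢ Icc Δ₁ Δ₂,
      (Φ p = ψ - π ∨ Φ p = ψ + π) → (Q p).2 < -Δ₂)
    (hhigh : ∀ p ∈ Icc (-α) α ×ˢ Icc Δ₁ Δ₂, Φ p = ψ → (Q p).2 > Δ₂) :
    ∀ a b : ℝ, a ≤ b → ∀ g : ℝ → ℝ × ℝ,
      ContinuousOn g (Icc a b) →
      MapsTo g (Icc a b) (Icc (-α) α ×ˢ Icc Δ₁ Δ₂) →
      Φ (g a) ≤ ψ - π → Φ (g b) ≥ ψ + π →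
      ∃ a₀ b₀ a₁ b₁ : ℝ,
        a₀ ∈ Icc a b ∧ b₀ ∈ Icc a b ∧ a₁ ∈ Icc a b ∧ b₁ ∈ Icc a b ∧
        a₀ < b₀ ∧ b₀ < a₁ ∧ a₁ < b₁ ∧
        (∀ t ∈ Ioo a₀ b₀,
          g t ∈ {p ∈ Icc (-α) α ×ˢ Icc Δ₁ Δ₂ | ψ - π < Φ p ∧ Φ p < ψ} ∧
          (Q (g t)).2 ∈ Ioo Δ₁ Δ₂) ∧
        (Q (g a₀)).2 = Δ₁ ∧ (Q (g b₀)).2 = Δ₂ ∧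
        (∀ t ∈ Ioo a₁ b₁,
          g t ∈ {p ∈ Icc (-α) α ×ˢ Icc Δ₁ Δ₂ | ψ < Φ p ∧ Φ p < ψ + π} ∧
          (Q (g t)).2 ∈ Ioo Δ₁ Δ₂) ∧
        (Q (g a₁)).2 = Δ₂ ∧ (Q (g b₁)).2 = Δ₁ :=
  statement17_general α Δ₁ Δ₂ hΔ₁ hΔ₁₂ Φ Q hΦ hQ ψ hlow hhigh
end

section
/- Let α > 0 and 0 < Δ₁ < Δ₂ be reals, R = [−α, α] × [Δ₁, Δ₂] ⊂ ℝ², Q : R → ℝ² a continuous map with Q(p) ∈ [−α, α] × ℝ for all p ∈ R, and M₀, M₁ disjoint subsets of R. Assume: (A) for every continuous curve g : [a,b] → R with g₂(a) = Δ₁ and g₂(b) = Δ₂ there exist a₀ < b₀ < a₁ < b₁ in [a,b] such that g(t) ∈ M₀ and Q₂(g(t)) ∈ (Δ₁, Δ₂) for all t ∈ (a₀, b₀), with Q₂(g(a₀)) = Δ₁ and Q₂(g(b₀)) = Δ₂, and g(t) ∈ M₁ and Q₂(g(t)) ∈ (Δ₁, Δ₂) for all t ∈ (a₁, b₁), with Q₂(g(a₁))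 = Δ₂ and Q₂(g(b₁)) = Δ₁; (B) for each i ∈ {0,1}, every point p of the closure of M_i with Δ₁ ≤ Q₂(p) ≤ Δ₂ belongs to M_i. Then for every sequence (s_n)_{n≥0} in {0,1} there exists a sequence (x_n)_{n≥0} in R with x_{n+1} = Q(x_n), x_n ∈ M_{s_n}, and Δ₁ ≤ Q₂(x_n) ≤ Δ₂ for all integers n ≥ 0. -/
/-!
Call a curve vertical if it runs inside `R` from the bottom edge `y = Δ₁` to the top edge
`y = Δ₂`. By (A), a vertical curve `γ` contains, for each symbol `i`, an arc lying in `M i`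
along which `Q ∘ γ` is again vertical after possibly reversing the parametrization; (B) makes
the closed arc lie in `M i`. Iterating, the points of `R` whose first `n` iterates follow the
prescribed symbols contain a curve, so they form a decreasing sequence of nonempty compact sets,
and any point of their intersection has the required forward orbit.
-/

noncomputable section
open Real Set

section Itinerary

variable {X : Type*} {f : X → X} {K : Set X} {T : ℕ → Set X}

def itinerarySet (f : X → X) (K : Set X) (T : ℕ → Set X) (n : ℕ) : Set X :=
  {x ∈ K | ∀ k < n, f^[k] x ∈ T k}

theorem itinerarySet_zero : itinerarySet f K T 0 = K := by
  simp [itinerarySet]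

theorem itinerarySet_succ (n : ℕ) :
    itinerarySet f K T (n + 1) = itinerarySet f K T n ∩ f^[n] ⁻¹' T n := by
  ext x
  simp only [itinerarySet, mem_inter_iff, mem_ofPred_eq, mem_preimage, Nat.lt_succ_iff_lt_or_eq,
    or_imp, forall_and, forall_eq, and_assoc]

theorem itinerarySet_succ_subset (n : ℕ) : itinerarySet f K T (n + 1) ⊆ itinerarySet f K T n := by
  rw [itinerarySet_succ]
  exact inter_subset_left

variable [TopologicalSpace X]

theorem isClosed_itinerarySet_and_continuousOn_iterate (hK : IsClosed K) (hf : ContinuousOn f K)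
    (hT : ∀ k, IsClosed (T k)) (hTK : ∀ k, T k ⊆ K) (n : ℕ) :
    IsClosed (itinerarySet f K T n) ∧ ContinuousOn f^[n] (itinerarySet f K T n) := by
  induction n with
  | zero =>
    rw [itinerarySet_zero]
    exact ⟨hK, continuousOn_id⟩
  | succ n ih =>
    refine ⟨itinerarySet_succ n ▸ ih.2.preimage_isClosed_of_isClosed ih.1 (hT n), ?_⟩
    rw [Function.iterate_succ']
    refine hf.comp (ih.2.mono (itinerarySet_succ_subset n)) fun x hx => hTK n ?_
    rw [itinerarySet_succ] at hx
    exact hx.2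

theorem IsCompact.exists_forall_iterate_mem [T2Space X] (hK : IsCompact K) (hf : ContinuousOn f K)
    (hT : ∀ k, IsClosed (T k)) (hTK : ∀ k, T k ⊆ K)
    (hne : ∀ n, (itinerarySet f K T n).Nonempty) : ∃ x, ∀ k, f^[k] x ∈ T k := by
  have hclosed n := (isClosed_itinerarySet_and_continuousOn_iterate hK.isClosed hf hT hTK n).1
  obtain ⟨x, hx⟩ := IsCompact.nonempty_iInter_of_sequence_nonempty_isCompact_isClosed _
    itinerarySet_succ_subset hne (by rwa [itinerarySet_zero]) hclosed
  exact ⟨x, fun k => (mem_iInter.mp hx (k + 1)).2 k k.lt_succ_self⟩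

end Itinerary

section VerticalCurve

variable {R T : Set (ℝ × ℝ)} {Q : ℝ × ℝ → ℝ × ℝ} {M : Set (ℝ × ℝ)} {y₁ y₂ a b c d : ℝ}
  {γ : ℝ → ℝ × ℝ}

structure IsVerticalCurve (R : Set (ℝ × ℝ)) (y₁ y₂ a b : ℝ) (γ : ℝ → ℝ × ℝ) : Prop where
  le : a ≤ b
  continuousOn : ContinuousOn γ (Icc a b)
  mapsTo : MapsTo γ (Icc a b) R
  left : (γ a).2 = y₁
  right : (γ b).2 = y₂

theorem IsVerticalCurve.reverse (h : IsVerticalCurve R y₁ y₂ a b γ) :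
    IsVerticalCurve R y₂ y₁ a b (fun t => γ (a + b - t)) := by
  have hσ : MapsTo (fun t => a + b - t) (Icc a b) (Icc a b) := fun t ht =>
    ⟨by linarith [ht.2], by linarith [ht.1]⟩
  refine ⟨h.le, h.continuousOn.comp (by fun_prop) hσ, h.mapsTo.comp hσ, ?_, ?_⟩
  · simpa using h.right
  · simpa using h.left

theorem isClosed_sep_snd_mem_Icc (hR : IsClosed R) (hQ : ContinuousOn Q R) (hMR : M ⊆ R)
    (hB : ∀ p ∈ closure M, y₁ ≤ (Q p).2 → (Q p).2 ≤ y₂ → p ∈ M) :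
    IsClosed {p ∈ M | (Q p).2 ∈ Icc y₁ y₂} := by
  have heq : {p ∈ M | (Q p).2 ∈ Icc y₁ y₂} = closure M ∩ (fun p => (Q p).2) ⁻¹' Icc y₁ y₂ :=
    Subset.antisymm (fun p hp => ⟨subset_closure hp.1, hp.2⟩)
      fun p hp => ⟨hB p hp.1 hp.2.1 hp.2.2, hp.2⟩
  rw [heq]
  have hQ₂ : ContinuousOn (fun p => (Q p).2) (closure M) :=
    continuous_snd.comp_continuousOn (hQ.mono (closure_minimal hMR hR))
  exact hQ₂.preimage_isClosed_of_isClosed isClosed_closure isClosed_Icc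

theorem isVerticalCurve_comp_of_mapsTo_Ioo (hQ : ContinuousOn Q R) (hT : IsClosed T)
    (hTR : T ⊆ R) (hQT : MapsTo Q T R) (hγ : ContinuousOn γ (Icc c d)) (hcd : c < d)
    (hIoo : MapsTo γ (Ioo c d) T) (hc : (Q (γ c)).2 = y₁) (hd : (Q (γ d)).2 = y₂) :
    IsVerticalCurve R y₁ y₂ c d (Q ∘ γ) ∧ MapsTo γ (Icc c d) T := by
  have hIcc : MapsTo γ (Icc c d) T := by
    have := hIoo.closure_of_continuousOn (closure_Ioo hcd.ne ▸ hγ)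
    rwa [closure_Ioo hcd.ne, hT.closure_eq] at this
  exact ⟨⟨hcd.le, hQ.comp hγ (hIcc.mono_right hTR), hQT.comp hIcc, hc, hd⟩, hIcc⟩

theorem exists_isVerticalCurve_comp_reparam (hQ : ContinuousOn Q R) (hT : IsClosed T)
    (hTR : T ⊆ R) (hQT : MapsTo Q T R) (hγ : ContinuousOn γ (Icc a b)) (hac : a ≤ c)
    (hcd : c < d) (hdb : d ≤ b) (hIoo : MapsTo γ (Ioo c d) T)
    (hends : (Q (γ c)).2 = y₁ ∧ (Q (γ d)).2 = y₂ ∨ (Q (γ c)).2 = y₂ ∧ (Q (γ d)).2 = y₁) :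
    ∃ c d σ, MapsTo σ (Icc c d) (Icc a b) ∧ IsVerticalCurve R y₁ y₂ c d (Q ∘ γ ∘ σ) ∧
      MapsTo (γ ∘ σ) (Icc c d) T := by
  have hsub : Icc c d ⊆ Icc a b := Icc_subset_Icc hac hdb
  rcases hends with ⟨hc, hd⟩ | ⟨hc, hd⟩
  · obtain ⟨hcurve, hmaps⟩ :=
      isVerticalCurve_comp_of_mapsTo_Ioo hQ hT hTR hQT (hγ.mono hsub) hcd hIoo hc hd
    exact ⟨c, d, id, fun t ht => hsub ht, hcurve, hmaps⟩
  · obtain ⟨hcurve, hmaps⟩ :=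
      isVerticalCurve_comp_of_mapsTo_Ioo hQ hT hTR hQT (hγ.mono hsub) hcd hIoo hc hd
    have hσ : MapsTo (fun t => c + d - t) (Icc c d) (Icc c d) := fun t ht =>
      ⟨by linarith [ht.2], by linarith [ht.1]⟩
    exact ⟨c, d, fun t => c + d - t, hσ.mono_right hsub, hcurve.reverse, hmaps.comp hσ⟩

theorem exists_isVerticalCurve_iterate_comp {T : ℕ → Set (ℝ × ℝ)} {a₀ b₀ : ℝ}
    (h₀ : IsVerticalCurve R y₁ y₂ a₀ b₀ γ)
    (hstep : ∀ a b γ, IsVerticalCurve R y₁ y₂ a b γ → ∀ k, ∃ c d σ,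
      MapsTo σ (Icc c d) (Icc a b) ∧ IsVerticalCurve R y₁ y₂ c d (Q ∘ γ ∘ σ) ∧
        MapsTo (γ ∘ σ) (Icc c d) (T k)) (n : ℕ) :
    ∃ a b p, IsVerticalCurve R y₁ y₂ a b (Q^[n] ∘ p) ∧
      MapsTo p (Icc a b) (itinerarySet Q R T n) := by
  induction n with
  | zero =>
    refine ⟨a₀, b₀, γ, h₀, fun t ht => ?_⟩
    rw [itinerarySet_zero]
    exact h₀.mapsTo ht
  | succ n ih =>
    obtain ⟨a, b, p, hp, hpD⟩ := ih
    obtain ⟨c, d, σ, hσ, hcurve, hmaps⟩ := hstep a b _ hp n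
    refine ⟨c, d, p ∘ σ, ?_, fun t ht => ?_⟩
    · rwa [Function.iterate_succ', Function.comp_assoc, ← Function.comp_assoc _ p]
    · rw [itinerarySet_succ]
      exact ⟨hpD (hσ ht), hmaps ht⟩

end VerticalCurve

theorem statement18_general
    (α Δ₁ Δ₂ : ℝ) (hα : 0 < α) (hΔ₁₂ : Δ₁ < Δ₂)
    (Q : ℝ × ℝ → ℝ × ℝ)
    (hQ : ContinuousOn Q (Icc (-α) α ×ˢ Icc Δ₁ Δ₂))
    (hQrange : ∀ p ∈ Icc (-α) α ×ˢ Icc Δ₁ Δ₂, (Q p).1 ∈ Icc (-α) α)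
    (M : Fin 2 → Set (ℝ × ℝ))
    (hMR : ∀ i, M i ⊆ Icc (-α) α ×ˢ Icc Δ₁ Δ₂)
    (hA : ∀ a b : ℝ, a ≤ b → ∀ g : ℝ → ℝ × ℝ,
      ContinuousOn g (Icc a b) →
      MapsTo g (Icc a b) (Icc (-α) α ×ˢ Icc Δ₁ Δ₂) →
      (g a).2 = Δ₁ → (g b).2 = Δ₂ →
      ∃ a₀ b₀ a₁ b₁ : ℝ,
        a₀ ∈ Icc a b ∧ b₀ ∈ Icc a b ∧ a₁ ∈ Icc a b ∧ b₁ ∈ Icc a b ∧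
        a₀ < b₀ ∧ b₀ < a₁ ∧ a₁ < b₁ ∧
        (∀ t ∈ Ioo a₀ b₀, g t ∈ M 0 ∧ (Q (g t)).2 ∈ Ioo Δ₁ Δ₂) ∧
        (Q (g a₀)).2 = Δ₁ ∧ (Q (g b₀)).2 = Δ₂ ∧
        (∀ t ∈ Ioo a₁ b₁, g t ∈ M 1 ∧ (Q (g t)).2 ∈ Ioo Δ₁ Δ₂) ∧
        (Q (g a₁)).2 = Δ₂ ∧ (Q (g b₁)).2 = Δ₁)
    (hB : ∀ i : Fin 2, ∀ p ∈ closure (M i),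
      Δ₁ ≤ (Q p).2 → (Q p).2 ≤ Δ₂ → p ∈ M i) :
    ∀ s : ℕ → Fin 2, ∃ x : ℕ → ℝ × ℝ,
      (∀ n, x n ∈ Icc (-α) α ×ˢ Icc Δ₁ Δ₂) ∧
      (∀ n, x (n + 1) = Q (x n)) ∧
      (∀ n, x n ∈ M (s n)) ∧
      (∀ n, Δ₁ ≤ (Q (x n)).2 ∧ (Q (x n)).2 ≤ Δ₂) := by
  intro s
  set R := Icc (-α) α ×ˢ Icc Δ₁ Δ₂
  set T : Fin 2 → Set (ℝ × ℝ) := fun i => {p ∈ M i | (Q p).2 ∈ Icc Δ₁ Δ₂}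
  have hTR i : T i ⊆ R := fun p hp => hMR i hp.1
  have hQT i : MapsTo Q (T i) R := fun p hp => ⟨hQrange p (hTR i hp), hp.2⟩
  have hT i : IsClosed (T i) :=
    isClosed_sep_snd_mem_Icc (isClosed_Icc.prod isClosed_Icc) hQ (hMR i) (hB i)
  have hstep : ∀ a b γ, IsVerticalCurve R Δ₁ Δ₂ a b γ → ∀ k, ∃ c d σ,
      MapsTo σ (Icc c d) (Icc a b) ∧ IsVerticalCurve R Δ₁ Δ₂ c d (Q ∘ γ ∘ σ) ∧
        MapsTo (γ ∘ σ) (Icc c d) (T (s k)) := by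
    intro a b γ hγ k
    obtain ⟨a₀, b₀, a₁, b₁, ha₀, hb₀, ha₁, hb₁, h₀, -, h₁, hM₀, hQa₀, hQb₀, hM₁, hQa₁, hQb₁⟩ :=
      hA a b hγ.le γ hγ.continuousOn hγ.mapsTo hγ.left hγ.right
    obtain hk | hk : s k = 0 ∨ s k = 1 := by omega
    all_goals rw [hk]
    · exact exists_isVerticalCurve_comp_reparam hQ (hT 0) (hTR 0) (hQT 0) hγ.continuousOn ha₀.1 h₀
        hb₀.2 (fun t ht => ⟨(hM₀ t ht).1, Ioo_subset_Icc_self (hM₀ t ht).2⟩) (.inl ⟨hQa₀, hQb₀⟩)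
    · exact exists_isVerticalCurve_comp_reparam hQ (hT 1) (hTR 1) (hQT 1) hγ.continuousOn ha₁.1 h₁
        hb₁.2 (fun t ht => ⟨(hM₁ t ht).1, Ioo_subset_Icc_self (hM₁ t ht).2⟩) (.inr ⟨hQa₁, hQb₁⟩)
  have h₀ : IsVerticalCurve R Δ₁ Δ₂ Δ₁ Δ₂ (fun t => (0, t)) :=
    ⟨hΔ₁₂.le, by fun_prop, fun t ht => ⟨⟨by linarith, hα.le⟩, ht⟩, rfl, rfl⟩
  have hne n : (itinerarySet Q R (fun k => T (s k)) n).Nonempty := by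
    obtain ⟨a, b, p, hp, hpD⟩ := exists_isVerticalCurve_iterate_comp h₀ hstep n
    exact ⟨p a, hpD (left_mem_Icc.mpr hp.le)⟩
  obtain ⟨x, hx⟩ := (isCompact_Icc.prod isCompact_Icc).exists_forall_iterate_mem hQ
    (fun k => hT (s k)) (fun k => hTR (s k)) hne
  exact ⟨fun n => Q^[n] x, fun n => hTR _ (hx n), fun n => Function.iterate_succ_apply' Q n x,
    fun n => (hx n).1, fun n => (hx n).2⟩

theorem statement18
    (α Δ₁ Δ₂ : ℝ) (hα : 0 < α) (hΔ₁ : 0 < Δ₁) (hΔ₁₂ : Δ₁ < Δ₂)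
    (Q : ℝ × ℝ → ℝ × ℝ)
    (hQ : ContinuousOn Q (Icc (-α) α ×ˢ Icc Δ₁ Δ₂))
    (hQrange : ∀ p ∈ Icc (-α) α ×ˢ Icc Δ₁ Δ₂, (Q p).1 ∈ Icc (-α) α)
    (M : Fin 2 → Set (ℝ × ℝ))
    (hMR : ∀ i, M i ⊆ Icc (-α) α ×ˢ Icc Δ₁ Δ₂)
    (hdisj : Disjoint (M 0) (M 1))
    (hA : ∀ a b : ℝ, a ≤ b → ∀ g : ℝ → ℝ × ℝ,
      ContinuousOn g (Icc a b) →
      MapsTo g (Icc a b) (Icc (-α) α ×ˢ Icc Δ₁ Δ₂) →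
      (g a).2 = Δ₁ → (g b).2 = Δ₂ →
      ∃ a₀ b₀ a₁ b₁ : ℝ,
        a₀ ∈ Icc a b ∧ b₀ ∈ Icc a b ∧ a₁ ∈ Icc a b ∧ b₁ ∈ Icc a b ∧
        a₀ < b₀ ∧ b₀ < a₁ ∧ a₁ < b₁ ∧
        (∀ t ∈ Ioo a₀ b₀, g t ∈ M 0 ∧ (Q (g t)).2 ∈ Ioo Δ₁ Δ₂) ∧
        (Q (g a₀)).2 = Δ₁ ∧ (Q (g b₀)).2 = Δ₂ ∧
        (∀ t ∈ Ioo a₁ b₁, g t ∈ M 1 ∧ (Q (g t)).2 ∈ Ioo Δ₁ Δ₂) ∧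
        (Q (g a₁)).2 = Δ₂ ∧ (Q (g b₁)).2 = Δ₁)
    (hB : ∀ i : Fin 2, ∀ p ∈ closure (M i),
      Δ₁ ≤ (Q p).2 → (Q p).2 ≤ Δ₂ → p ∈ M i) :
    ∀ s : ℕ → Fin 2, ∃ x : ℕ → ℝ × ℝ,
      (∀ n, x n ∈ Icc (-α) α ×ˢ Icc Δ₁ Δ₂) ∧
      (∀ n, x (n + 1) = Q (x n)) ∧
      (∀ n, x n ∈ M (s n)) ∧
      (∀ n, Δ₁ ≤ (Q (x n)).2 ∧ (Q (x n)).2 ≤ Δ₂) :=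
  statement18_general α Δ₁ Δ₂ hα hΔ₁₂ Q hQ hQrange M hMR hA hB
end
end

section
/- Let α > 0 and 0 < Δ₁ < Δ₂ be reals, R = [−α, α] × [Δ₁, Δ₂] ⊂ ℝ², Q : R → ℝ² a continuous map, and M₀, M₁ disjoint subsets of R. Assume: (i) for every sequence (σ_n)_{n≥0} in {0,1} there exists a sequence (y_n)_{n≥0} in R with y_{n+1} = Q(y_n), y_n ∈ M_{σ_n}, and Δ₁ ≤ Q₂(y_n) ≤ Δ₂ for all n ≥ 0; (ii) for each i ∈ {0,1}, every point p of the closure of M_i with Δ₁ ≤ Q₂(p) ≤ Δ₂ belongs to M_i. Then for every bi-infinite sequence (s_n)_{n∈ℤ} in {0,1} there exists a bi-infinite sequence (y_n)_{n∈ℤ} in R with y_{n+1} = Q(y_n) and y_n ∈ M_{s_n} for all integers n. -/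
/-!
Shifting a forward orbit with itinerary `n ↦ s (n - k)` by `k` gives, for every `k`, a point of
`(ℤ → X)` that follows the map and the itinerary `s` from time `-k` on. These sets of bi-infinite
sequences are closed and decreasing in the compact product `K^ℤ`, so by Cantor's intersection
theorem some sequence follows the map and lies in `closure (M (s n))` at every time. Since its
image under the map again lies in `K`, the boundary property puts it in `M (s n)` itself.
-/

open Set

theorem ContinuousOn.isClosed_graphOn {α β : Type*} [TopologicalSpace α] [TopologicalSpace β]
    [T2Space β] {f : α → β} {s : Set α} (hf : ContinuousOn f s) (hs : IsClosed s) :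
    IsClosed (s.graphOn f) := by
  have hpair : ContinuousOn (fun p : α × β => (f p.1, p.2)) (Prod.fst ⁻¹' s) :=
    (hf.comp continuousOn_fst fun _ hp => hp).prodMk continuousOn_snd
  convert hpair.preimage_isClosed_of_isClosed (hs.preimage continuous_fst) isClosed_diagonal
    using 1
  ext p
  simp [mem_graphOn]

section TailOrbits

variable {X ι : Type*} [TopologicalSpace X] {f : X → X} {K : Set X} {M : ι → Set X}

def tailOrbits (f : X → X) (K : Set X) (M : ι → Set X) (s : ℤ → ι) (k : ℤ) : Set (ℤ → X) :=
  {w | (∀ n, w n ∈ K) ∧ ∀ n ≥ k, f (w n) = w (n + 1) ∧ w n ∈ closure (M (s n))}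

theorem tailOrbits_mono {s : ℤ → ι} {k l : ℤ} (hkl : k ≤ l) :
    tailOrbits f K M s k ⊆ tailOrbits f K M s l :=
  fun _ hw => ⟨hw.1, fun n hn => hw.2 n (hkl.trans hn)⟩

theorem isClosed_tailOrbits [T2Space X] (hK : IsClosed K) (hf : ContinuousOn f K)
    (s : ℤ → ι) (k : ℤ) : IsClosed (tailOrbits f K M s k) := by
  have hstep : ∀ n, IsClosed {w : ℤ → X | (w n, w (n + 1)) ∈ K.graphOn f} := fun n =>
    (hf.isClosed_graphOn hK).preimage (by fun_prop)
  have hclosure : ∀ n, IsClosed {w : ℤ → X | w n ∈ closure (M (s n))} := fun n =>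
    isClosed_closure.preimage (continuous_apply n)
  have hset : tailOrbits f K M s k = (⋂ n, {w | w n ∈ K}) ∩
      ⋂ n ≥ k, {w | (w n, w (n + 1)) ∈ K.graphOn f} ∩ {w | w n ∈ closure (M (s n))} := by
    ext w
    simp only [tailOrbits, mem_graphOn, mem_ofPred_eq, mem_inter_iff, mem_iInter]
    exact ⟨fun ⟨hK, htail⟩ => ⟨hK, fun n hn => ⟨⟨hK n, (htail n hn).1⟩, (htail n hn).2⟩⟩,
      fun ⟨hK, htail⟩ => ⟨hK, fun n hn => ⟨(htail n hn).1.2, (htail n hn).2⟩⟩⟩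
  rw [hset]
  exact (isClosed_iInter fun n => hK.preimage (continuous_apply n)).inter
    (isClosed_biInter fun n _ => (hstep n).inter (hclosure n))

theorem isCompact_tailOrbits [T2Space X] (hK : IsCompact K) (hf : ContinuousOn f K)
    (s : ℤ → ι) (k : ℤ) : IsCompact (tailOrbits f K M s k) :=
  (isCompact_univ_pi fun _ => hK).of_isClosed_subset (isClosed_tailOrbits hK.isClosed hf s k)
    fun _ hw n _ => hw.1 n

theorem tailOrbits_nonempty
    (hforward : ∀ σ : ℕ → ι, ∃ y : ℕ → X,
      (∀ n, y n ∈ K) ∧ (∀ n, y (n + 1) = f (y n)) ∧ ∀ n, y n ∈ M (σ n))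
    (s : ℤ → ι) (k : ℤ) : (tailOrbits f K M s k).Nonempty := by
  obtain ⟨y, hyK, hyf, hyM⟩ := hforward fun m => s (m + k)
  refine ⟨fun n => y (n - k).toNat, fun n => hyK _, fun n hn => ?_⟩
  obtain ⟨m, rfl⟩ : ∃ m : ℕ, n = m + k := ⟨(n - k).toNat, by omega⟩
  have hm : (m + k - k : ℤ).toNat = m := by omega
  have hm1 : (m + k + 1 - k : ℤ).toNat = m + 1 := by omega
  simp only [hm, hm1]
  exact ⟨(hyf m).symm, subset_closure (hyM m)⟩

theorem exists_int_orbit_of_forall_nat_orbit [T2Space X] (hK : IsCompact K)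
    (hf : ContinuousOn f K)
    (hforward : ∀ σ : ℕ → ι, ∃ y : ℕ → X,
      (∀ n, y n ∈ K) ∧ (∀ n, y (n + 1) = f (y n)) ∧ ∀ n, y n ∈ M (σ n))
    (hboundary : ∀ i, ∀ p ∈ closure (M i), f p ∈ K → p ∈ M i) (s : ℤ → ι) :
    ∃ y : ℤ → X, (∀ n, y n ∈ K) ∧ (∀ n, y (n + 1) = f (y n)) ∧ ∀ n, y n ∈ M (s n) := by
  obtain ⟨y, hy⟩ := IsCompact.nonempty_iInter_of_sequence_nonempty_isCompact_isClosed
    (fun j : ℕ => tailOrbits f K M s (-j)) (fun j => tailOrbits_mono (by omega))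
    (fun j => tailOrbits_nonempty hforward s _) (isCompact_tailOrbits hK hf s _)
    (fun j => isClosed_tailOrbits hK.isClosed hf s _)
  rw [mem_iInter] at hy
  have hyK : ∀ n, y n ∈ K := (hy 0).1
  have hstep : ∀ n, f (y n) = y (n + 1) ∧ y n ∈ closure (M (s n)) := fun n =>
    (hy (-n).toNat).2 n (by omega)
  refine ⟨y, hyK, fun n => (hstep n).1.symm, fun n => ?_⟩
  exact hboundary _ _ (hstep n).2 ((hstep n).1 ▸ hyK (n + 1))

end TailOrbits

theorem statement19_general
    (α Δ₁ Δ₂ : ℝ)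
    (Q : ℝ × ℝ → ℝ × ℝ)
    (hQ : ContinuousOn Q (Icc (-α) α ×ˢ Icc Δ₁ Δ₂))
    (M : Fin 2 → Set (ℝ × ℝ))
    (hforward : ∀ σs : ℕ → Fin 2, ∃ y : ℕ → ℝ × ℝ,
      (∀ n, y n ∈ Icc (-α) α ×ˢ Icc Δ₁ Δ₂) ∧
      (∀ n, y (n + 1) = Q (y n)) ∧
      (∀ n, y n ∈ M (σs n)) ∧
      (∀ n, Δ₁ ≤ (Q (y n)).2 ∧ (Q (y n)).2 ≤ Δ₂))
    (hB : ∀ i : Fin 2, ∀ p ∈ closure (M i),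
      Δ₁ ≤ (Q p).2 → (Q p).2 ≤ Δ₂ → p ∈ M i) :
    ∀ s : ℤ → Fin 2, ∃ y : ℤ → ℝ × ℝ,
      (∀ n, y n ∈ Icc (-α) α ×ˢ Icc Δ₁ Δ₂) ∧
      (∀ n, y (n + 1) = Q (y n)) ∧
      (∀ n, y n ∈ M (s n)) :=
  exists_int_orbit_of_forall_nat_orbit (isCompact_Icc.prod isCompact_Icc) hQ
    (fun σ => (hforward σ).imp fun _ hy => ⟨hy.1, hy.2.1, hy.2.2.1⟩)
    (fun i p hp hQp => hB i p hp hQp.2.1 hQp.2.2)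

theorem statement19
    (α Δ₁ Δ₂ : ℝ) (hα : 0 < α) (hΔ₁ : 0 < Δ₁) (hΔ₁₂ : Δ₁ < Δ₂)
    (Q : ℝ × ℝ → ℝ × ℝ)
    (hQ : ContinuousOn Q (Icc (-α) α ×ˢ Icc Δ₁ Δ₂))
    (M : Fin 2 → Set (ℝ × ℝ))
    (hMR : ∀ i, M i ⊆ Icc (-α) α ×ˢ Icc Δ₁ Δ₂)
    (hdisj : Disjoint (M 0) (M 1))
    (hforward : ∀ σs : ℕ → Fin 2, ∃ y : ℕ → ℝ × ℝ,
      (∀ n, y n ∈ Icc (-α) α ×ˢ Icc Δ₁ Δ₂) ∧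
      (∀ n, y (n + 1) = Q (y n)) ∧
      (∀ n, y n ∈ M (σs n)) ∧
      (∀ n, Δ₁ ≤ (Q (y n)).2 ∧ (Q (y n)).2 ≤ Δ₂))
    (hB : ∀ i : Fin 2, ∀ p ∈ closure (M i),
      Δ₁ ≤ (Q p).2 → (Q p).2 ≤ Δ₂ → p ∈ M i) :
    ∀ s : ℤ → Fin 2, ∃ y : ℤ → ℝ × ℝ,
      (∀ n, y n ∈ Icc (-α) α ×ˢ Icc Δ₁ Δ₂) ∧
      (∀ n, y (n + 1) = Q (y n)) ∧
      (∀ n, y n ∈ M (s n)) :=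
  statement19_general α Δ₁ Δ₂ Q hQ M hforward hB
end
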